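/- arXiv:2306.03607 — 5 statements merged into one kernel-verified Lean document; each statement's English description precedes it below -/
import Mathlib

section
/- Let (x_0, x_1, ...) be a monotone decreasing sequence of positive reals with associated functions v(t)=x_⌊t⌋, Q(t)=∫_0^t 1/v(u)du. Let i* be the index at which the deterministic algorithm stops, i.e., the smallest i such that Q(i+1) ≥ 1. Then i* + x_{i*} ≤ 2 · min_i (i + x_i). -/
open Finset in
/-- For a monotone decreasing positive sequence, the deterministic stopping
algorithm (stop at the smallest index `i*` with `Q(i*+1) = ∑_{j≤i*} 1/x j ≥ 1`)
pays at most twice the offline optimum `min_i (i + x_i)`, realization by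
realization. -/
theorem deterministic_stopping_monotone
    (x : ℕ → ℝ) (hpos : ∀ i, 0 < x i) (hmono : ∀ i, x (i + 1) ≤ x i)
    (istar : ℕ)
    (hstop : 1 ≤ ∑ j ∈ Finset.range (istar + 1), 1 / x j)
    (hmin : ∀ i < istar, ∑ j ∈ Finset.range (i + 1), 1 / x j < 1) :
    ∀ i : ℕ, (istar : ℝ) + x istar ≤ 2 * ((i : ℝ) + x i) := by
  have hanti : Antitone x := antitone_nat_of_succ_le hmono
  intro i
  rcases lt_trichotomy i istar with hlt | heq | hgt
  · -- i < istar
    have hx0 : 0 < x i := hpos i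
    have h1 : ∑ j ∈ Finset.range istar, 1 / x j < 1 := by
      have := hmin (istar - 1) (by omega)
      rwa [Nat.sub_add_cancel (by omega)] at this
    have h2 : ((istar - i : ℕ) : ℝ) * (1 / x i) ≤ ∑ j ∈ Finset.Ico i istar, 1 / x j := by
      rw [← Nat.card_Ico i istar, ← nsmul_eq_mul]
      apply Finset.card_nsmul_le_sum
      intro j hj
      rw [Finset.mem_Ico] at hj
      exact one_div_le_one_div_of_le (hpos j) (hanti hj.1)
    have h3 : ∑ j ∈ Finset.Ico i istar, 1 / x j ≤ ∑ j ∈ Finset.range istar, 1 / x j := by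
      apply Finset.sum_le_sum_of_subset_of_nonneg
      · intro j hj
        rw [Finset.mem_Ico] at hj
        exact Finset.mem_range.mpr hj.2
      · intro j _ _
        exact le_of_lt (one_div_pos.mpr (hpos j))
    have hcast : ((istar - i : ℕ) : ℝ) = (istar : ℝ) - i := by
      push_cast [Nat.cast_sub hlt.le]; ring
    have h4 : ((istar : ℝ) - i) * (1 / x i) < 1 := by
      rw [← hcast]; linarith
    have h5 : (istar : ℝ) - i < x i := by
      rw [mul_one_div, div_lt_one hx0] at h4
      exact h4
    have h6 : x istar ≤ x i := hanti hlt.le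
    have : (0:ℝ) ≤ i := Nat.cast_nonneg i
    linarith
  · subst heq
    have := hpos i
    have : (0:ℝ) ≤ i := Nat.cast_nonneg i
    linarith [hpos i]
  · -- istar < i
    have hx0 : 0 < x istar := hpos istar
    have h1 : ∑ j ∈ Finset.range (istar + 1), 1 / x j ≤ ((istar + 1 : ℕ) : ℝ) * (1 / x istar) := by
      have := Finset.sum_le_card_nsmul (Finset.range (istar + 1)) (fun j => 1 / x j)
        (1 / x istar) (fun j hj => by
          rw [Finset.mem_range] at hj
          exact one_div_le_one_div_of_le hx0 (hanti (by omega)))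
      simpa [nsmul_eq_mul] using this
    have h2 : x istar ≤ (istar : ℝ) + 1 := by
      have : (1:ℝ) ≤ ((istar + 1 : ℕ) : ℝ) * (1 / x istar) := le_trans hstop h1
      rw [mul_one_div, le_div_iff₀ hx0, one_mul] at this
      push_cast at this
      linarith
    have h3 : (istar : ℝ) + 1 ≤ i := by exact_mod_cast hgt
    linarith [hpos i]
end

section
/- For the ski-rental instance embedded in super-martingale stopping (X_i = B for i < T and X_i = 0 for i ≥ T, with B, T positive integers), no deterministic online algorithm achieves cost at most (2−ε)·min(B, T) for all B, T, for any fixed ε > 0. -/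
/-- The cost of a deterministic ski-rental algorithm: `some k` means "buy after
renting `k` days" (paying `k + B` if `k < T`, else `T`); `none` means never buy
(paying `T`). -/
noncomputable def skiCost (alg : Option ℕ) (B T : ℕ) : ℝ :=
  match alg with
  | none => T
  | some k => if k < T then (k : ℝ) + B else T

/-- No deterministic online algorithm for ski rental (hence for super-martingale
stopping) is `(2 - ε)`-competitive: for every `ε > 0` and every deterministic
algorithm, there are `B, T > 0` with cost exceeding `(2 - ε) * min B T`. -/
theorem ski_rental_deterministic_lower_bound :
    ∀ ε : ℝ, 0 < ε → ∀ alg : Option ℕ, ∃ B T : ℕ, 0 < B ∧ 0 < T ∧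
      (2 - ε) * min (B : ℝ) (T : ℝ) < skiCost alg B T := by
  intro ε hε alg
  cases alg with
  | none =>
    refine ⟨1, 2, one_pos, two_pos, ?_⟩
    simp [skiCost]
    nlinarith
  | some k =>
    refine ⟨k + 2, k + 1, by omega, by omega, ?_⟩
    have hk : k < k + 1 := Nat.lt_succ_self k
    simp [skiCost, hk]
    nlinarith [Nat.cast_nonneg (α := ℝ) k]
end

section
/- Consider the sequence X_0 = n, X_{n+1} = 0, and for 1 ≤ i ≤ n, conditionally on X_{i-1}: X_i = e^n · X_{i-1} with probability e^{-n} and X_i = 0 with probability 1 − e^{-n}. Then E[X_i] = n for all 0 ≤ i ≤ n, the algorithm that stops at the first index i where min(X_0,...,X_i) ≤ i incurs expected cost at least n, while the policy that queries until seeing 0 has expected cost O(1) (at most e^{-n}·Σ_{i=1}^{n+1} i + 1 plus lower order terms, which is bounded by a constant independent of n). -/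
open Finset

/-- Probability that the first zero of the sequence occurs at step `ω`
(`ω = n+1` encodes "no zero among `X_1,…,X_n`"; recall `X_{n+1} = 0`). -/
noncomputable def P5 (n ω : ℕ) : ℝ :=
  if ω ≤ n then (1 - Real.exp (-(n : ℝ))) * Real.exp (-(((ω : ℝ) - 1) * (n : ℝ)))
  else if ω = n + 1 then Real.exp (-((n : ℝ) * (n : ℝ))) else 0

/-- Value of `X_i` (for `i ≤ n`) on the outcome with first zero at `ω`:
`X_i = n·e^{i n}` before the first zero, `0` afterwards (`X_0 = n`). -/
noncomputable def X5 (n i ω : ℕ) : ℝ :=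
  if i < ω then (n : ℝ) * Real.exp ((i : ℝ) * (n : ℝ)) else 0

/-- Expected cost of the RevisedSkiRental algorithm on this instance: it stops
paying `ω` when the first zero appears at step `ω ≤ n`, and otherwise stops at
index `n` paying `n + X_n`. -/
noncomputable def ERev5 (n : ℕ) : ℝ :=
  ∑ ω ∈ Finset.Icc 1 (n + 1),
    P5 n ω * (if ω ≤ n then (ω : ℝ) else (n : ℝ) + (n : ℝ) * Real.exp ((n : ℝ) * (n : ℝ)))

/-- Expected cost of the policy that queries until seeing a zero. -/
noncomputable def EOpt5 (n : ℕ) : ℝ :=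
  ∑ ω ∈ Finset.Icc 1 (n + 1), P5 n ω * (ω : ℝ)

/-! `X_i = n e^{in}` exactly when the first zero comes after step `i`, an event of probability
`e^{-in}`, so `E[X_i] = n`. With probability `e^{-n²}` none of `X_1, …, X_n` vanishes, and the
revised algorithm then pays `n + n e^{n²}`: this outcome alone contributes `n` to its cost.
Querying until the first zero instead costs `ω` with probability at most `e^{-(ω-1)}`, so its
expected cost is dominated by `∑ (k + 1) e^{-k}`. -/

open Real

lemma P5_nonneg (n ω : ℕ) : 0 ≤ P5 n ω := by
  have : exp (-(n : ℝ)) ≤ 1 := exp_le_one_iff.mpr (by simp)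
  unfold P5
  split_ifs
  · exact mul_nonneg (by linarith) (exp_pos _).le
  all_goals positivity

lemma P5_le_exp (n ω : ℕ) : P5 n ω ≤ exp (-((ω - 1 : ℝ) * n)) := by
  unfold P5
  split_ifs with hle heq
  · exact mul_le_of_le_one_left (exp_pos _).le (by linarith [exp_pos (-(n : ℝ))])
  · subst heq
    exact (congrArg exp (by push_cast; ring)).le
  · positivity

/-- The first zero comes after step `k` with probability `e^{-kn}`. -/
lemma sum_Ioc_P5 {n k : ℕ} (hk : k ≤ n) :
    ∑ ω ∈ Ioc k (n + 1), P5 n ω = exp (-((k : ℝ) * n)) := by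
  refine Nat.decreasingInduction
    (motive := fun k _ => ∑ ω ∈ Ioc k (n + 1), P5 n ω = exp (-((k : ℝ) * n)))
    (fun k hk ih => ?_) (by simp [P5]) hk
  have hstep : P5 n (k + 1) = (1 - exp (-(n : ℝ))) * exp (-((k : ℝ) * n)) := by
    simp [P5, show k + 1 ≤ n from hk]
  rw [← sum_Ioc_consecutive _ k.le_succ (by omega : k + 1 ≤ n + 1), Nat.Ioc_succ_singleton,
    sum_singleton, ih, hstep, sub_mul, one_mul, ← exp_add]
  push_cast
  ring_nf

lemma sum_P5_mul_X5 (n i : ℕ) (hi : i ≤ n) :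
    ∑ ω ∈ Icc 1 (n + 1), P5 n ω * X5 n i ω = n := by
  have hfilter : (Icc 1 (n + 1)).filter (i < ·) = Ioc i (n + 1) := by
    ext ω; simp only [mem_filter, mem_Icc, mem_Ioc]; omega
  simp only [X5, mul_ite, mul_zero]
  rw [← sum_filter, hfilter, ← sum_mul, sum_Ioc_P5 hi, mul_left_comm, ← exp_add]
  simp

lemma le_ERev5 (n : ℕ) : (n : ℝ) ≤ ERev5 n := by
  have htop : P5 n (n + 1) * (n + n * exp ((n : ℝ) * n)) = n * exp (-((n : ℝ) * n)) + n := by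
    simp only [P5, if_neg (Nat.not_succ_le_self n), if_true]
    rw [mul_add, mul_left_comm, ← exp_add]
    simp [mul_comm]
  unfold ERev5
  rw [sum_Icc_succ_top (by omega), if_neg (Nat.not_succ_le_self n), htop]
  have hrest : 0 ≤ ∑ ω ∈ Icc 1 n,
      P5 n ω * (if ω ≤ n then (ω : ℝ) else n + n * exp ((n : ℝ) * n)) :=
    sum_nonneg fun ω _ => mul_nonneg (P5_nonneg n ω) (by split_ifs <;> positivity)
  have : 0 ≤ (n : ℝ) * exp (-((n : ℝ) * n)) := by positivity
  linarith

lemma EOpt5_le_tsum {n : ℕ} (hn : 1 ≤ n) :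
    EOpt5 n ≤ ∑' k : ℕ, ((k : ℝ) + 1) * exp (-1) ^ k := by
  set r := exp (-1)
  have hr : ‖r‖ < 1 := by simp [r, abs_of_pos (exp_pos _)]
  have hsum : Summable fun k : ℕ => ((k : ℝ) + 1) * r ^ k := by
    simpa [add_mul] using (summable_pow_mul_geometric_of_norm_lt_one 1 hr).add
      (summable_geometric_of_norm_lt_one hr)
  have hterm (k : ℕ) : P5 n (k + 1) * ((k + 1 : ℕ) : ℝ) ≤ ((k : ℝ) + 1) * r ^ k := by
    have : P5 n (k + 1) ≤ r ^ k := by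
      refine (P5_le_exp n (k + 1)).trans ?_
      rw [← exp_nat_mul, exp_le_exp]
      push_cast
      nlinarith [(Nat.one_le_cast (α := ℝ)).mpr hn, (k.cast_nonneg : (0 : ℝ) ≤ k)]
    rw [mul_comm]
    push_cast
    exact mul_le_mul_of_nonneg_left this (by positivity)
  calc EOpt5 n = ∑ k ∈ range (n + 1), P5 n (k + 1) * ((k + 1 : ℕ) : ℝ) := by
        rw [EOpt5, range_eq_Ico, sum_Ico_add' (fun ω => P5 n ω * ω), Ico_add_one_right_eq_Icc]
    _ ≤ ∑ k ∈ range (n + 1), ((k : ℝ) + 1) * r ^ k := sum_le_sum fun k _ => hterm k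
    _ ≤ ∑' k : ℕ, ((k : ℝ) + 1) * r ^ k :=
        hsum.sum_le_tsum _ fun k _ => by positivity

/-- `RevisedSkiRental` fails for super-martingale stopping: `E[X_i] = n` for all
`0 ≤ i ≤ n`, the revised algorithm has expected cost at least `n`, while the
query-until-zero policy has expected cost bounded by an absolute constant. -/
theorem revised_ski_rental_not_competitive :
    (∀ n : ℕ, 1 ≤ n → ∀ i ≤ n,
        ∑ ω ∈ Finset.Icc 1 (n + 1), P5 n ω * X5 n i ω = (n : ℝ)) ∧
    (∀ n : ℕ, 1 ≤ n → (n : ℝ) ≤ ERev5 n) ∧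
    (∃ C : ℝ, ∀ n : ℕ, 1 ≤ n → EOpt5 n ≤ C) :=
  ⟨fun n _ i hi => sum_P5_mul_X5 n i hi, fun n _ => le_ERev5 n,
    _, fun _ hn => EOpt5_le_tsum hn⟩
end

section
/- Let T be a finite rooted tree where each node v carries a positive value (also denoted v) and a probability distribution over its children, such that the super-martingale property holds: for every internal node v with children u_1,...,u_k and transition probabilities p_1,...,p_k, Σ_j p_j·u_j ≤ v. Define ALG(T) recursively: if T is a single node with value v, ALG(T) = v; otherwise, with root value v, ALG(T) = min(1,1/v)·v + (1 − min(1,1/v))·(1 + Σ_j p_j·ALG(T_j)), where T_j is the subtree rooted at u_j. Define OPT(T) recursively: OPT of a leaf is its value; OPT(T) = min( v, 1 + Σ_j p_j·OPT(T_j) ). Then ALG(T) ≤ 2·OPT(T). -/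
/-- A finite rooted tree where each node carries a positive value and a
probability distribution over its `k` children. -/
inductive VTree : Type where
  | node (v : ℝ) (k : ℕ) (p : Fin k → ℝ) (child : Fin k → VTree)

/-- The value at the root of a tree. -/
noncomputable def VTree.rootVal : VTree → ℝ
  | .node v _ _ _ => v

/-- Expected cost of the ThrowCoin algorithm: at a node with value `v`, stop
with probability `min 1 (1/v)` paying `v`; otherwise pay `1` and recurse on a
random child. A single node costs `v`. -/
noncomputable def VTree.ALG : VTree → ℝ
  | .node v 0 _ _ => v
  | .node v (k + 1) p child =>
      min 1 (1 / v) * v +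
        (1 - min 1 (1 / v)) * (1 + ∑ j : Fin (k + 1), p j * (child j).ALG)

/-- Optimal expected stopping cost on the tree. -/
noncomputable def VTree.OPT : VTree → ℝ
  | .node v 0 _ _ => v
  | .node v (k + 1) p child =>
      min v (1 + ∑ j : Fin (k + 1), p j * (child j).OPT)

/-- Positivity of values plus the super-martingale property: at every internal
node the transition probabilities are nonnegative, sum to one, and the expected
child value is at most the node's value. -/
def VTree.IsSuper : VTree → Prop
  | .node v k p child =>
      0 < v ∧ (∀ j, 0 ≤ p j) ∧
      (k = 0 ∨ ((∑ j, p j) = 1 ∧ (∑ j, p j * (child j).rootVal) ≤ v)) ∧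
      (∀ j, (child j).IsSuper)

theorem VTree.OPT_pos : ∀ T : VTree, T.IsSuper → 0 < T.OPT
  | .node v 0 p child, h => h.1
  | .node v (k+1) p child, h => by
    obtain ⟨hv, hp, _, hc⟩ := h
    simp only [VTree.OPT]
    apply lt_min hv
    have : 0 ≤ ∑ j : Fin (k+1), p j * (child j).OPT :=
      Finset.sum_nonneg fun j _ => mul_nonneg (hp j) (OPT_pos (child j) (hc j)).le
    linarith

theorem VTree.OPT_le_root : ∀ T : VTree, T.OPT ≤ T.rootVal
  | .node v 0 p child => le_of_eq rfl
  | .node v (k+1) p child => min_le_left _ _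

theorem VTree.alg_le : ∀ T : VTree, T.IsSuper → T.ALG ≤ 2 * T.OPT
  | .node v 0 p child, h => by
    simp only [VTree.ALG, VTree.OPT]; linarith [h.1]
  | .node v (k+1) p child, h => by
    obtain ⟨hv, hp, hm, hc⟩ := h
    rcases hm with h0 | ⟨hsum, hmart⟩
    · exact absurd h0 (Nat.succ_ne_zero k)
    simp only [VTree.ALG, VTree.OPT]
    have ih : ∀ j, (child j).ALG ≤ 2 * (child j).OPT := fun j => alg_le (child j) (hc j)
    set SA := ∑ j : Fin (k+1), p j * (child j).ALG with hSA
    set SO := ∑ j : Fin (k+1), p j * (child j).OPT with hSO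
    have hSAle : SA ≤ 2 * SO := by
      rw [hSA, hSO, Finset.mul_sum]
      apply Finset.sum_le_sum
      intro j _
      have := ih j
      nlinarith [hp j]
    have hSOpos : 0 ≤ SO :=
      Finset.sum_nonneg fun j _ => mul_nonneg (hp j) (OPT_pos (child j) (hc j)).le
    have hSOv : SO ≤ v := by
      calc SO ≤ ∑ j : Fin (k+1), p j * (child j).rootVal :=
            Finset.sum_le_sum fun j _ =>
              mul_le_mul_of_nonneg_left (OPT_le_root (child j)) (hp j)
        _ ≤ v := hmart
    rcases le_or_gt v 1 with hv1 | hv1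
    · have hmin : min 1 (1/v) = 1 := min_eq_left (by rw [le_div_iff₀ hv]; linarith)
      rw [hmin]
      have : v ≤ 2 * min v (1 + SO) := by
        rcases min_cases v (1+SO) with ⟨he,_⟩|⟨he,_⟩ <;> rw [he] <;> linarith
      linarith
    · have hmin : min 1 (1/v) = 1/v := min_eq_right (by rw [div_le_one hv]; linarith)
      rw [hmin]
      have h1v : 0 < 1/v := by positivity
      have h1vle : 1/v ≤ 1 := by rw [div_le_one hv]; linarith
      have hvv : 1/v * v = 1 := by field_simp
      have key1 : 1/v*v + (1 - 1/v) * (1 + SA) ≤ 2 * v := by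
        rw [hvv]
        have h2 : (1 - 1/v) * (1 + SA) ≤ (1 - 1/v) * (1 + 2*v) := by nlinarith
        nlinarith
      have key2 : 1/v*v + (1 - 1/v) * (1 + SA) ≤ 2 * (1 + SO) := by
        rw [hvv]
        nlinarith
      rcases min_cases v (1+SO) with ⟨he,_⟩|⟨he,_⟩ <;> rw [he]
      · exact key1
      · exact key2

/-- The ThrowCoin algorithm is 2-competitive for super-martingale stopping. -/
theorem throwCoin_two_competitive (T : VTree) (h : T.IsSuper) :
    T.ALG ≤ 2 * T.OPT := VTree.alg_le T h
end

section
/- Let n₁,...,n_k be nonnegative integers with Σ_i n_i = n, n ≥ 1. Define the cost of the learner as Cost_A = (1/n)·( Σ_{i=1}^n i + Σ_{i=1}^k n_i·i − n ), and let Cost₁ = (1/n)·Σ_{i=1}^n i and Cost₂ = 1 + (1/n)·Σ_{i=1}^k n_i·i. Then for every ε > 0 there exists n₀ such that for all n ≥ n₀ and all such (n_i), Cost_A ≥ (2 − ε)·min(Cost₁, Cost₂). -/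
open Finset

lemma gauss_icc (n : ℕ) : (∑ i ∈ Finset.Icc 1 n, i) * 2 = n * (n+1) := by
  induction n with
  | zero => simp
  | succ m ih =>
    rw [Finset.sum_Icc_succ_top (by omega)]
    ring_nf
    ring_nf at ih
    omega

/-- Core arithmetic of the (2−ε) lower bound for buying information for Min Sum
Set Cover: a learner querying batches of sizes `n_1,…,n_k` (summing to `n`,
interleaved with unit-cost feedback purchases) pays
`Cost_A = (1/n)(∑_{i=1}^n i + ∑_{i=1}^k n_i·i − n)`, while the no-feedback
learner pays `Cost₁ = (1/n)∑_{i=1}^n i` and the all-feedback learner pays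
`Cost₂ = 1 + (1/n)∑_{i=1}^k n_i·i`. For every `ε > 0` and all sufficiently
large `n`, `Cost_A ≥ (2 − ε)·min(Cost₁, Cost₂)`. -/
theorem buying_info_mssc_lower_bound_arith :
    ∀ ε : ℝ, 0 < ε → ∃ n₀ : ℕ, ∀ n : ℕ, n₀ ≤ n → ∀ k : ℕ, ∀ ns : ℕ → ℕ,
      (∑ i ∈ Finset.Icc 1 k, ns i) = n →
      (2 - ε) * min
          ((1 / (n : ℝ)) * ∑ i ∈ Finset.Icc 1 n, (i : ℝ))
          (1 + (1 / (n : ℝ)) * ∑ i ∈ Finset.Icc 1 k, (ns i : ℝ) * (i : ℝ))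
        ≤ (1 / (n : ℝ)) *
            ((∑ i ∈ Finset.Icc 1 n, (i : ℝ))
              + (∑ i ∈ Finset.Icc 1 k, (ns i : ℝ) * (i : ℝ)) - (n : ℝ)) := by
  intro ε hε
  refine ⟨max 3 ⌈4/ε⌉₊, ?_⟩
  intro n hn k ns hsum
  have hn3 : 3 ≤ n := le_trans (le_max_left _ _) hn
  have hN3 : (3:ℝ) ≤ (n:ℝ) := by exact_mod_cast hn3
  have hNpos : (0:ℝ) < (n:ℝ) := by linarith
  set N : ℝ := (n:ℝ) with hNdef
  set S : ℝ := ∑ i ∈ Finset.Icc 1 n, (i:ℝ) with hSdef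
  set T : ℝ := ∑ i ∈ Finset.Icc 1 k, (ns i : ℝ) * (i:ℝ) with hTdef
  -- Gauss sum
  have hS : 2 * S = N * (N + 1) := by
    have h2 : (((∑ i ∈ Finset.Icc 1 n, i) * 2 : ℕ) : ℝ) = ((n * (n+1) : ℕ) : ℝ) :=
      congrArg (Nat.cast : ℕ → ℝ) (gauss_icc n)
    push_cast at h2
    rw [hSdef, hNdef]
    linarith
  -- T ≥ N
  have hT : N ≤ T := by
    have h1 : N = ∑ i ∈ Finset.Icc 1 k, (ns i : ℝ) := by
      rw [hNdef, ← hsum]; push_cast; ring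
    rw [h1, hTdef]
    apply Finset.sum_le_sum
    intro i hi
    have h1i : (1:ℝ) ≤ (i:ℝ) := by exact_mod_cast (Finset.mem_Icc.mp hi).1
    nlinarith [Nat.cast_nonneg (α := ℝ) (ns i)]
  set ε' : ℝ := min ε 1 with hε'def
  have hε'pos : 0 < ε' := lt_min hε one_pos
  have hε'le1 : ε' ≤ 1 := min_le_right _ _
  have hε'leε : ε' ≤ ε := min_le_left _ _
  -- key: ε' * (N+1) ≥ 4
  have hkey4 : 4 ≤ ε' * (N + 1) := by
    rcases le_total 1 ε with h | h
    · have he : ε' = 1 := min_eq_right h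
      rw [he]; linarith
    · have he : ε' = ε := min_eq_left h
      have hceil : ((⌈4/ε⌉₊ : ℕ) : ℝ) ≤ N := by
        rw [hNdef]; exact_mod_cast le_trans (le_max_right 3 _) hn
      have h4 : 4/ε ≤ N := le_trans (Nat.le_ceil _) hceil
      have : 4 ≤ ε * N := by
        rw [div_le_iff₀ hε] at h4; linarith [mul_comm ε N]
      rw [he]; nlinarith
  have hkey : 2 * N ≤ ε' * S := by nlinarith
  have hS0 : 0 ≤ S := by
    rw [hSdef]; exact Finset.sum_nonneg fun i _ => Nat.cast_nonneg i
  have hT0 : 0 ≤ T := by linarith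
  have hmin0 : 0 ≤ min ((1/N) * S) (1 + (1/N) * T) := by
    apply le_min
    · positivity
    · positivity
  have step1 : (2 - ε) * min ((1/N) * S) (1 + (1/N) * T)
      ≤ (2 - ε') * min ((1/N) * S) (1 + (1/N) * T) :=
    mul_le_mul_of_nonneg_right (by linarith) hmin0
  have hinvN : 0 ≤ 1/N := by positivity
  rcases le_total ((1/N) * S) (1 + (1/N) * T) with h | h
  · rw [min_eq_left h] at step1 ⊢
    have hSNT : S ≤ N + T := by
      have h2 := mul_le_mul_of_nonneg_left h (le_of_lt hNpos)
      have hNe : N ≠ 0 := ne_of_gt hNpos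
      field_simp at h2
      linarith
    have key : (2 - ε') * S ≤ S + T - N := by linarith
    calc (2 - ε) * ((1/N) * S) ≤ (2 - ε') * ((1/N) * S) := step1
      _ = (1/N) * ((2 - ε') * S) := by ring
      _ ≤ (1/N) * (S + T - N) := mul_le_mul_of_nonneg_left key hinvN
  · rw [min_eq_right h] at step1 ⊢
    have hNTS : N + T ≤ S := by
      have h2 := mul_le_mul_of_nonneg_left h (le_of_lt hNpos)
      have hNe : N ≠ 0 := ne_of_gt hNpos
      field_simp at h2
      linarith
    have key : (2 - ε') * (N + T) ≤ S + T - N := by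
      nlinarith [mul_nonneg (by linarith : (0:ℝ) ≤ 1 - ε') (by linarith : (0:ℝ) ≤ S - N - T)]
    have hrw : 1 + (1/N) * T = (1/N) * (N + T) := by
      field_simp
    calc (2 - ε) * (1 + (1/N) * T) ≤ (2 - ε') * (1 + (1/N) * T) := step1
      _ = (1/N) * ((2 - ε') * (N + T)) := by rw [hrw]; ring
      _ ≤ (1/N) * (S + T - N) := mul_le_mul_of_nonneg_left key hinvN
end
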